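/- Let m > 1, let b₀, b₃ > 0 and b₂ ∈ ℝ with b₀² + b₂² + b₃² = 1, and define ψ : ℝ² → ℝ⁶ by ψ(u,v) = (−√(m²−1) u, b₀ cos(m u / b₀), b₀ sin(m u / b₀), b₂, b₃ sin(v/b₃), b₃ cos(v/b₃)). Let ν(u,v) := (0, ψ₂(u,v), ψ₃(u,v), ψ₄(u,v), ψ₅(u,v), ψ₆(u,v)) and W := ∂²ψ/∂u² + ∂²ψ/∂v² + (m²+1) ν. Then ∂W/∂u vanishes identically on ℝ² if and only if b₀² (m² + 1) = m². -/

import Mathlib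

open Real

/-- The candidate surface `ψ` in `𝔼¹₁ × S⁴ ⊂ ℝ⁶` from the proof of Theorem 6.1. -/
noncomputable def psiRS (m b₀ b₂ b₃ : ℝ) (u v : ℝ) : Fin 6 → ℝ :=
  ![-(Real.sqrt (m ^ 2 - 1)) * u,
    b₀ * Real.cos (m * u / b₀),
    b₀ * Real.sin (m * u / b₀),
    b₂,
    b₃ * Real.sin (v / b₃),
    b₃ * Real.cos (v / b₃)]

/-- The position vector `ν = (0, ψ₂, …, ψ₆)` in the `S⁴` factor. -/
noncomputable def nuRS (m b₀ b₂ b₃ : ℝ) (u v : ℝ) : Fin 6 → ℝ := fun i =>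
  if i = 0 then 0 else psiRS m b₀ b₂ b₃ u v i

/-- `W = ψ_uu + ψ_vv + (m²+1) ν`, twice the mean curvature vector of `ψ` in `𝔼¹₁ × S⁴`. -/
noncomputable def WRS (m b₀ b₂ b₃ : ℝ) (u v : ℝ) : Fin 6 → ℝ := fun i =>
  deriv (fun u' => deriv (fun u'' => psiRS m b₀ b₂ b₃ u'' v i) u') u +
    deriv (fun v' => deriv (fun v'' => psiRS m b₀ b₂ b₃ u v'' i) v') v +
    (m ^ 2 + 1) * nuRS m b₀ b₂ b₃ u v i

/-!
Only the components `ψ₂, ψ₃` depend on `u`. On them `ψ_vv = 0` and `ψ_uu = -(m/b₀)² ψ`, so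
`(W₂, W₃) = ((m²+1) b₀ - m²/b₀) (cos (m u/b₀), sin (m u/b₀))`, whose `u`-derivative vanishes
identically exactly when the amplitude does.
-/

theorem hasDerivAt_mul_cos_mul (a k x : ℝ) :
    HasDerivAt (fun y => a * cos (k * y)) (-(a * k) * sin (k * x)) x :=
  ((hasDerivAt_const_mul k).cos.const_mul a).congr_deriv (by ring)

theorem hasDerivAt_mul_sin_mul (a k x : ℝ) :
    HasDerivAt (fun y => a * sin (k * y)) (a * k * cos (k * x)) x :=
  ((hasDerivAt_const_mul k).sin.const_mul a).congr_deriv (by ring)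

theorem deriv_deriv_mul_cos_mul (a k x : ℝ) :
    deriv (deriv fun y => a * cos (k * y)) x = -(a * k ^ 2) * cos (k * x) := by
  simp only [funext fun y => (hasDerivAt_mul_cos_mul a k y).deriv]
  convert (hasDerivAt_mul_sin_mul (-(a * k)) k x).deriv using 1
  ring

theorem deriv_deriv_mul_sin_mul (a k x : ℝ) :
    deriv (deriv fun y => a * sin (k * y)) x = -(a * k ^ 2) * sin (k * x) := by
  simp only [funext fun y => (hasDerivAt_mul_sin_mul a k y).deriv]
  convert (hasDerivAt_mul_cos_mul (a * k) k x).deriv using 1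
  ring

section WRS
variable (m b₀ b₂ b₃ u v : ℝ)

theorem WRS_apply_one :
    WRS m b₀ b₂ b₃ u v 1 = ((m ^ 2 + 1) * b₀ - b₀ * (m / b₀) ^ 2) * cos (m / b₀ * u) := by
  have hψ (u v : ℝ) : psiRS m b₀ b₂ b₃ u v 1 = b₀ * cos (m / b₀ * u) := by
    simp [psiRS, mul_div_right_comm]
  simp only [WRS, nuRS, hψ, deriv_deriv_mul_cos_mul, deriv_const',
    if_neg (by decide : (1 : Fin 6) ≠ 0)]
  ring

theorem WRS_apply_two :
    WRS m b₀ b₂ b₃ u v 2 = ((m ^ 2 + 1) * b₀ - b₀ * (m / b₀) ^ 2) * sin (m / b₀ * u) := by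
  have hψ (u v : ℝ) : psiRS m b₀ b₂ b₃ u v 2 = b₀ * sin (m / b₀ * u) := by
    simp [psiRS, mul_div_right_comm]
  simp only [WRS, nuRS, hψ, deriv_deriv_mul_sin_mul, deriv_const',
    if_neg (by decide : (2 : Fin 6) ≠ 0)]
  ring

theorem WRS_apply_eq_WRS_zero (i : Fin 6) (h1 : i ≠ 1) (h2 : i ≠ 2) :
    WRS m b₀ b₂ b₃ u v i = WRS m b₀ b₂ b₃ 0 v i := by
  fin_cases i <;> simp_all [WRS, nuRS, psiRS]

end WRS

theorem sub_mul_div_sq_eq_zero_iff {m b : ℝ} (hb : b ≠ 0) :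
    (m ^ 2 + 1) * b - b * (m / b) ^ 2 = 0 ↔ b ^ 2 * (m ^ 2 + 1) = m ^ 2 := by
  rw [sub_eq_zero, ← mul_right_inj' hb]
  field_simp

theorem WRS_parallel_iff_general (m b₀ b₂ b₃ : ℝ) (hm : 1 < m)
    (hb₀ : 0 < b₀) :
    (∀ (u v : ℝ) (i : Fin 6), deriv (fun u' => WRS m b₀ b₂ b₃ u' v i) u = 0) ↔
      b₀ ^ 2 * (m ^ 2 + 1) = m ^ 2 := by
  rw [← sub_mul_div_sq_eq_zero_iff hb₀.ne']
  constructor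
  · intro h
    have h₀ := h 0 0 2
    rw [funext fun u => WRS_apply_two m b₀ b₂ b₃ u 0, (hasDerivAt_mul_sin_mul _ _ 0).deriv] at h₀
    have hk : m / b₀ ≠ 0 := div_ne_zero (by linarith) hb₀.ne'
    simpa [hk] using h₀
  · intro hC u v i
    by_cases h1 : i = 1
    · simp only [h1, WRS_apply_one, hC, zero_mul, deriv_const']
    by_cases h2 : i = 2
    · simp only [h2, WRS_apply_two, hC, zero_mul, deriv_const']
    simp only [WRS_apply_eq_WRS_zero (i := i) (h1 := h1) (h2 := h2), deriv_const']

/-- `∂W/∂u` vanishes identically if and only if `b₀² (m² + 1) = m²`. -/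
theorem WRS_parallel_iff (m b₀ b₂ b₃ : ℝ) (hm : 1 < m)
    (hb₀ : 0 < b₀) (hb₃ : 0 < b₃)
    (hrel : b₀ ^ 2 + b₂ ^ 2 + b₃ ^ 2 = 1) :
    (∀ (u v : ℝ) (i : Fin 6), deriv (fun u' => WRS m b₀ b₂ b₃ u' v i) u = 0) ↔
      b₀ ^ 2 * (m ^ 2 + 1) = m ^ 2 :=
  WRS_parallel_iff_general m b₀ b₂ b₃ hm hb₀
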